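/- arXiv:1810.07851 — 5 statements merged into one kernel-verified Lean document; each statement's English description precedes it below -/
import Mathlib

section
/- Let K ≥ 1, ω₀ > 0. Let J : ℝ → Matrix (Fin K) (Fin K) ℝ, let S = diag(ν₁,…,ν_K) be a diagonal real matrix with ν₁ = 0, and let P : ℝ → Matrix (Fin K) (Fin K) ℝ be differentiable with P(θ) invertible for all θ and ω₀ • P'(θ) = J(θ) · P(θ) − P(θ) · S for all θ. Let Φ : ℝ → ℝ^K be differentiable and suppose P(θ)⁻¹ Φ'(θ) = e₁ for all θ, where e₁ is the first standard basis vector. Define R(θ) := (P(θ) · P(θ)ᵀ)⁻¹ Φ'(θ). Then R is differentiable and satisfies the adjoint equation ω₀ • R'(θ) = − J(θ)ᵀ R(θ) for all θ, together with the normalization ⟨R(θ), Φ'(θ)⟩ = 1 for all θ, where ⟨·,·⟩ is the Euclidean inner product on ℝ^K. -/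
attribute [local instance] Matrix.normedAddCommGroup Matrix.normedSpace

open Matrix

private lemma aux_det_diff {K : ℕ} {M : ℝ → Matrix (Fin K) (Fin K) ℝ}
    (h : ∀ i j, Differentiable ℝ fun t => M t i j) :
    Differentiable ℝ fun t => (M t).det := by
  have hfun : (fun t => (M t).det)
      = fun t => ∑ σ : Equiv.Perm (Fin K), (Equiv.Perm.sign σ : ℝ) * ∏ i, M t (σ i) i := by
    funext t
    rw [Matrix.det_apply']
  rw [hfun]
  exact Differentiable.fun_sum fun σ _ =>
    (Differentiable.fun_finset_prod fun i _ => h (σ i) i).const_mul _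

private lemma aux_inv_entry_diff {K : ℕ} {M : ℝ → Matrix (Fin K) (Fin K) ℝ}
    (hM : ∀ t, IsUnit (M t)) (h : ∀ i j, Differentiable ℝ fun t => M t i j) (i j : Fin K) :
    Differentiable ℝ fun t => (M t)⁻¹ i j := by
  have hdet : ∀ t, (M t).det ≠ 0 := fun t =>
    IsUnit.ne_zero ((Matrix.isUnit_iff_isUnit_det (M t)).1 (hM t))
  have hfun : (fun t => (M t)⁻¹ i j)
      = fun t => ((M t).det)⁻¹ * ((M t).updateRow j (Pi.single i 1)).det := by
    funext t
    rw [Matrix.inv_def, Matrix.smul_apply, Ring.inverse_eq_inv', Matrix.adjugate_apply,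
      smul_eq_mul]
  rw [hfun]
  refine Differentiable.mul ((aux_det_diff h).inv hdet) (aux_det_diff fun a b => ?_)
  simp only [Matrix.updateRow_apply]
  by_cases hab : a = j
  · simp [hab]
  · simpa [hab] using h a b

/-- Given the Floquet decomposition data of a stable limit cycle
(`ω₀ • P' = J P − P S` with `S = diag ν`, `ν₁ = 0`, `P(θ)` invertible, and
`P(θ)⁻¹ Φ'(θ) = e₁`), the vector `R(θ) := (P(θ) P(θ)ᵀ)⁻¹ Φ'(θ)` is differentiable and
satisfies the adjoint equation `ω₀ • R' = − Jᵀ R` with normalization `⟨R, Φ'⟩ = 1`. -/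
theorem prc_satisfies_adjoint_equation
    {K : ℕ} (hK : 1 ≤ K) (ω₀ : ℝ) (hω : 0 < ω₀)
    (J : ℝ → Matrix (Fin K) (Fin K) ℝ)
    (ν : Fin K → ℝ) (hν1 : ν ⟨0, hK⟩ = 0)
    (S : Matrix (Fin K) (Fin K) ℝ) (hS : S = Matrix.diagonal ν)
    (P P' : ℝ → Matrix (Fin K) (Fin K) ℝ)
    (hP : ∀ θ, HasDerivAt P (P' θ) θ)
    (hPinv : ∀ θ, IsUnit (P θ))
    (hFloquet : ∀ θ : ℝ, ω₀ • P' θ = J θ * P θ - P θ * S)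
    (Φ : ℝ → (Fin K → ℝ))
    (hΦ : Differentiable ℝ Φ)
    (htangent : ∀ θ : ℝ, (P θ)⁻¹.mulVec (deriv Φ θ) = Pi.single (⟨0, hK⟩ : Fin K) 1)
    (R : ℝ → (Fin K → ℝ))
    (hR : ∀ θ : ℝ, R θ = (P θ * (P θ)ᵀ)⁻¹.mulVec (deriv Φ θ)) :
    Differentiable ℝ R ∧
      (∀ θ : ℝ, ω₀ • deriv R θ = -(J θ)ᵀ.mulVec (R θ)) ∧
      (∀ θ : ℝ, R θ ⬝ᵥ deriv Φ θ = 1) := by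
  set i0 : Fin K := ⟨0, hK⟩ with hi0
  set e : Fin K → ℝ := Pi.single i0 1 with he
  -- entrywise derivatives of P
  have hPentry : ∀ (t : ℝ) (i j : Fin K), HasDerivAt (fun s => P s i j) (P' t i j) t :=
    fun t i j => hasDerivAt_pi.mp (hasDerivAt_pi.mp (hP t) i) j
  have hPd : ∀ i j, Differentiable ℝ fun t => P t i j :=
    fun i j t => (hPentry t i j).differentiableAt
  have hdet : ∀ t, IsUnit (P t).det := fun t => (Matrix.isUnit_iff_isUnit_det (P t)).1 (hPinv t)
  have hdetT : ∀ t, IsUnit ((P t)ᵀ).det := fun t => by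
    rw [Matrix.det_transpose]; exact hdet t
  have hPTinv : ∀ t, IsUnit ((P t)ᵀ) := fun t => (Matrix.isUnit_iff_isUnit_det _).2 (hdetT t)
  -- Q = (Pᵀ)⁻¹
  set Q : ℝ → Matrix (Fin K) (Fin K) ℝ := fun t => ((P t)ᵀ)⁻¹ with hQ
  have hQd : ∀ i j, Differentiable ℝ fun t => Q t i j := by
    intro i j
    exact aux_inv_entry_diff hPTinv (fun i j => hPd j i) i j
  set Q' : ℝ → Matrix (Fin K) (Fin K) ℝ :=
    fun t => Matrix.of fun i j => deriv (fun s => Q s i j) t with hQ'def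
  have hQ' : ∀ (t : ℝ) (i j : Fin K), HasDerivAt (fun s => Q s i j) (Q' t i j) t :=
    fun t i j => ((hQd i j) t).hasDerivAt
  -- identities Q Pᵀ = 1, Pᵀ Q = 1
  have hQP : ∀ t, Q t * (P t)ᵀ = 1 := fun t => Matrix.nonsing_inv_mul _ (hdetT t)
  have hPQ : ∀ t, (P t)ᵀ * Q t = 1 := fun t => Matrix.mul_nonsing_inv _ (hdetT t)
  -- deriv Φ = P e
  have hΦ' : ∀ t, deriv Φ t = (P t).mulVec e := by
    intro t
    have h1 := congrArg ((P t).mulVec) (htangent t)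
    rwa [Matrix.mulVec_mulVec, Matrix.mul_nonsing_inv _ (hdet t), Matrix.one_mulVec] at h1
  -- R = Q e
  have hRQ : ∀ t, R t = (Q t).mulVec e := by
    intro t
    rw [hR t, hΦ' t, Matrix.mulVec_mulVec, Matrix.mul_inv_rev, mul_assoc,
      Matrix.nonsing_inv_mul _ (hdet t), mul_one]
  have hRv : ∀ t, R t = fun i => Q t i i0 := by
    intro t
    funext i
    rw [hRQ t, he, Matrix.mulVec_single]
    simp
  -- derivative of R
  have hRhas : ∀ t, HasDerivAt R (fun i => Q' t i i0) t := by
    intro t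
    have hfun : R = fun s => fun i => Q s i i0 := funext fun s => hRv s
    rw [hfun]
    exact hasDerivAt_pi.mpr fun i => hQ' t i i0
  have hRdiff : Differentiable ℝ R := fun t => (hRhas t).differentiableAt
  have hRderiv : ∀ t, deriv R t = fun i => Q' t i i0 := fun t => (hRhas t).deriv
  -- Q' Pᵀ + Q P'ᵀ = 0
  have hkey : ∀ t, Q' t * (P t)ᵀ + Q t * (P' t)ᵀ = 0 := by
    intro t
    ext i j
    have hF : HasDerivAt (fun s => ∑ k, Q s i k * P s j k)
        (∑ k, (Q' t i k * P t j k + Q t i k * P' t j k)) t :=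
      HasDerivAt.fun_sum fun k _ => (hQ' t i k).mul (hPentry t j k)
    have hconst : (fun s => ∑ k, Q s i k * P s j k) = fun _ => (1 : Matrix (Fin K) (Fin K) ℝ) i j := by
      funext s
      have := congrFun (congrFun (hQP s) i) j
      simpa [Matrix.mul_apply] using this
    rw [hconst] at hF
    have hzero : (∑ k, (Q' t i k * P t j k + Q t i k * P' t j k)) = 0 :=
      hF.unique (hasDerivAt_const t _)
    simp only [Matrix.add_apply, Matrix.mul_apply, Matrix.transpose_apply, Matrix.zero_apply]
    rw [← Finset.sum_add_distrib]
    exact hzero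
  -- Q' = -(Q P'ᵀ Q)
  have hQ'eq : ∀ t, Q' t = -(Q t * (P' t)ᵀ * Q t) := by
    intro t
    have h1 : Q' t * (P t)ᵀ = -(Q t * (P' t)ᵀ) := eq_neg_of_add_eq_zero_left (hkey t)
    calc Q' t = Q' t * ((P t)ᵀ * Q t) := by rw [hPQ t, mul_one]
    _ = (Q' t * (P t)ᵀ) * Q t := by rw [mul_assoc]
    _ = -(Q t * (P' t)ᵀ) * Q t := by rw [h1]
    _ = -(Q t * (P' t)ᵀ * Q t) := by rw [neg_mul]
  -- ω₀ • Q' = -(Jᵀ Q) + Q Sᵀ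
  have hQ'ode : ∀ t, ω₀ • Q' t = -((J t)ᵀ * Q t) + Q t * Sᵀ := by
    intro t
    have hFT : (ω₀ • P' t)ᵀ = (P t)ᵀ * (J t)ᵀ - Sᵀ * (P t)ᵀ := by
      rw [hFloquet t, Matrix.transpose_sub, Matrix.transpose_mul, Matrix.transpose_mul]
    calc ω₀ • Q' t = -(Q t * (ω₀ • P' t)ᵀ * Q t) := by
          rw [hQ'eq t, Matrix.transpose_smul, smul_neg]
          congr 1
          rw [Matrix.mul_smul, Matrix.smul_mul]
    _ = -(Q t * ((P t)ᵀ * (J t)ᵀ - Sᵀ * (P t)ᵀ) * Q t) := by rw [hFT]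
    _ = -((J t)ᵀ * Q t - Q t * Sᵀ) := by
          have h2 : Q t * ((P t)ᵀ * (J t)ᵀ - Sᵀ * (P t)ᵀ) * Q t
              = (J t)ᵀ * Q t - Q t * Sᵀ := by
            have h3 : Q t * ((P t)ᵀ * (J t)ᵀ - Sᵀ * (P t)ᵀ) * Q t
                = (Q t * (P t)ᵀ) * ((J t)ᵀ * Q t) - (Q t * Sᵀ) * ((P t)ᵀ * Q t) := by
              noncomm_ring
            rw [h3, hQP t, hPQ t, one_mul, mul_one]
          rw [h2]
    _ = -((J t)ᵀ * Q t) + Q t * Sᵀ := by rw [neg_sub, sub_eq_neg_add]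
  refine ⟨hRdiff, ?_, ?_⟩
  · -- adjoint equation
    intro θ
    have hSe : Sᵀ.mulVec e = 0 := by
      rw [hS, Matrix.diagonal_transpose, he, Matrix.diagonal_mulVec_single, hν1, zero_mul]
      simp
    have hcol : ∀ (A : Matrix (Fin K) (Fin K) ℝ), A.mulVec e = fun i => A i i0 := by
      intro A
      funext i
      rw [he, Matrix.mulVec_single]
      simp
    calc ω₀ • deriv R θ = ω₀ • (Q' θ).mulVec e := by rw [hRderiv θ, hcol]
    _ = (ω₀ • Q' θ).mulVec e := by rw [Matrix.smul_mulVec]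
    _ = (-((J θ)ᵀ * Q θ) + Q θ * Sᵀ).mulVec e := by rw [hQ'ode θ]
    _ = -((J θ)ᵀ.mulVec ((Q θ).mulVec e)) + (Q θ).mulVec (Sᵀ.mulVec e) := by
          rw [Matrix.add_mulVec, Matrix.neg_mulVec, Matrix.mulVec_mulVec, Matrix.mulVec_mulVec]
    _ = -((J θ)ᵀ.mulVec (R θ)) := by rw [hSe, Matrix.mulVec_zero, add_zero, hRQ θ]
  · -- normalization
    intro θ
    have hQT : (Q θ)ᵀ = (P θ)⁻¹ := by
      show ((P θ)ᵀ⁻¹)ᵀ = (P θ)⁻¹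
      rw [← Matrix.transpose_nonsing_inv, Matrix.transpose_transpose]
    have h1 : R θ ⬝ᵥ deriv Φ θ = ((Q θ)ᵀ * P θ) i0 i0 := by
      rw [hRv θ, hΦ' θ]
      simp [he, Matrix.mul_apply, dotProduct, Matrix.mulVec_single]
    rw [h1, hQT, Matrix.nonsing_inv_mul _ (hdet θ), Matrix.one_apply_eq]
end

section
/- Let b, ζ, T > 0 and let f : ℝ → ℝ be continuous on [0, T] with f(0) ≤ ζ/2. Suppose that for all 0 ≤ u ≤ t ≤ T with t − u ≤ 1/b, if f(s) ≥ ζ/2 for all s ∈ [u, t], then f(t) ≤ f(u) − (bζ/4)(t − u) + ζ/4. Then f(t) < ζ for all t ∈ [0, T]. -/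
/-- Deterministic contradiction argument underlying the exponential
escape-time bound: if `f(0) ≤ ζ/2` and, on every window `[u,t] ⊆ [0,T]` of length at
most `1/b` on which `f ≥ ζ/2`, one has `f(t) ≤ f(u) − (bζ/4)(t−u) + ζ/4`, then `f`
never reaches `ζ` on `[0,T]`. -/
theorem escape_time_contradiction_argument
    (b ζ T : ℝ) (hb : 0 < b) (hζ : 0 < ζ) (hT : 0 < T)
    (f : ℝ → ℝ) (hf : ContinuousOn f (Set.Icc 0 T))
    (h0 : f 0 ≤ ζ / 2)
    (hdecay : ∀ u t : ℝ, 0 ≤ u → u ≤ t → t ≤ T → t - u ≤ 1 / b →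
      (∀ s ∈ Set.Icc u t, ζ / 2 ≤ f s) →
      f t ≤ f u - (b * ζ / 4) * (t - u) + ζ / 4) :
    ∀ t ∈ Set.Icc (0 : ℝ) T, f t < ζ := by
  by_contra h
  push_neg at h
  obtain ⟨t1, ht1, hft1⟩ := h
  -- the first time f reaches ζ
  set S : Set ℝ := Set.Icc 0 T ∩ f ⁻¹' Set.Ici ζ with hS
  have hSne : S.Nonempty := ⟨t1, ht1, hft1⟩
  have hScl : IsClosed S :=
    hf.preimage_isClosed_of_isClosed isClosed_Icc isClosed_Ici
  have hSbdd : BddBelow S := ⟨0, fun x hx => hx.1.1⟩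
  set t0 := sInf S with ht0def
  have ht0S : t0 ∈ S := hScl.csInf_mem hSne hSbdd
  have ht0Icc : t0 ∈ Set.Icc (0:ℝ) T := ht0S.1
  have hft0 : ζ ≤ f t0 := ht0S.2
  have hmin : ∀ s, 0 ≤ s → s < t0 → f s < ζ := by
    intro s hs0 hst
    by_contra hc
    push_neg at hc
    exact absurd (csInf_le hSbdd ⟨⟨hs0, le_trans hst.le ht0Icc.2⟩, hc⟩) (not_le.2 hst)
  -- the last time before t0 where f ≤ ζ/2
  set A : Set ℝ := Set.Icc 0 t0 ∩ f ⁻¹' Set.Iic (ζ/2) with hA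
  have hAne : A.Nonempty := ⟨0, ⟨le_refl 0, ht0Icc.1⟩, h0⟩
  have hAcl : IsClosed A :=
    (hf.mono (Set.Icc_subset_Icc le_rfl ht0Icc.2)).preimage_isClosed_of_isClosed
      isClosed_Icc isClosed_Iic
  have hAbdd : BddAbove A := ⟨t0, fun x hx => hx.1.2⟩
  set u := sSup A with hudef
  have huA : u ∈ A := hAcl.csSup_mem hAne hAbdd
  have hu0 : 0 ≤ u := huA.1.1
  have hut0 : u ≤ t0 := huA.1.2
  have hfu_le : f u ≤ ζ / 2 := huA.2
  have hult0 : u < t0 := lt_of_le_of_ne hut0 (by intro he; rw [he] at hfu_le; linarith)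
  have hgt : ∀ s, u < s → s ≤ t0 → ζ / 2 < f s := by
    intro s hus hst
    by_contra hc
    push_neg at hc
    exact absurd (le_csSup hAbdd ⟨⟨le_trans hu0 hus.le, hst⟩, hc⟩) (not_le.2 hus)
  -- f u ≥ ζ/2 by continuity from the right
  have hfu_ge : ζ / 2 ≤ f u := by
    have hsub : Set.Ioc u t0 ⊆ Set.Icc 0 T :=
      fun s hs => ⟨le_trans hu0 hs.1.le, le_trans hs.2 ht0Icc.2⟩
    have htend : Filter.Tendsto f (nhdsWithin u (Set.Ioc u t0)) (nhds (f u)) :=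
      ((hf u ⟨hu0, le_trans hut0 ht0Icc.2⟩).mono hsub).tendsto
    have hne : (nhdsWithin u (Set.Ioc u t0)).NeBot := by
      refine mem_closure_iff_nhdsWithin_neBot.1 ?_
      rw [closure_Ioc hult0.ne]
      exact ⟨le_rfl, hult0.le⟩
    refine ge_of_tendsto htend ?_
    filter_upwards [self_mem_nhdsWithin] with s hs
    exact (hgt s hs.1 hs.2).le
  have hge : ∀ s ∈ Set.Icc u t0, ζ / 2 ≤ f s := by
    intro s hs
    rcases eq_or_lt_of_le hs.1 with rfl | hlt
    · exact hfu_ge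
    · exact (hgt s hlt hs.2).le
  by_cases hlen : t0 - u ≤ 1 / b
  · have := hdecay u t0 hu0 hut0 ht0Icc.2 hlen hge
    nlinarith [mul_nonneg (by positivity : (0:ℝ) ≤ b * ζ / 4) (sub_nonneg.2 hut0)]
  · push_neg at hlen
    have hbpos : 0 < 1 / b := by positivity
    set u' := t0 - 1 / b with hu'
    have huu' : u < u' := by dsimp [u']; linarith
    have hu'0 : 0 ≤ u' := le_trans hu0 huu'.le
    have hu't0 : u' ≤ t0 := by dsimp [u']; linarith
    have hdec := hdecay u' t0 hu'0 hu't0 ht0Icc.2 (by dsimp [u']; ring_nf; linarith)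
      (fun s hs => hge s ⟨le_trans huu'.le hs.1, hs.2⟩)
    have hu'lt : f u' < ζ := hmin u' hu'0 (by dsimp [u']; linarith)
    have hcancel : (b * ζ / 4) * (t0 - u') = ζ / 4 := by
      dsimp [u']; field_simp; ring
    rw [hcancel] at hdec
    linarith
end

section
/- Let b, T, ε > 0 and let g : ℝ → ℝ. Set t_i := i/(2b) for i ∈ ℕ and N := ⌊2b(T + 1/b)⌋ + 1. Suppose that for every i < N and every u ∈ [t_i, t_{i+1}], |g(u) − g(t_i)| ≤ ε. Then for every t ∈ [0, T] and every s ∈ [0, 1/b], |g(t + s) − g(t)| ≤ 4ε. -/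
/-- Covering lemma: control of the increments of a path `g` over the
grid intervals `[i/(2b), (i+1)/(2b)]`, `i < N := ⌊2b(T + 1/b)⌋ + 1`, yields uniform
control of its increments over all windows of length `1/b` starting in `[0, T]`. -/
theorem grid_covering_lemma
    (b T ε : ℝ) (hb : 0 < b) (hT : 0 < T) (hε : 0 < ε)
    (g : ℝ → ℝ) (N : ℕ) (hN : N = ⌊2 * b * (T + 1 / b)⌋₊ + 1)
    (hgrid : ∀ i : ℕ, i < N →
      ∀ u ∈ Set.Icc ((i : ℝ) / (2 * b)) (((i : ℝ) + 1) / (2 * b)),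
        |g u - g ((i : ℝ) / (2 * b))| ≤ ε) :
    ∀ t ∈ Set.Icc (0 : ℝ) T, ∀ s ∈ Set.Icc (0 : ℝ) (1 / b),
      |g (t + s) - g t| ≤ 4 * ε := by
  intro t ht s hs
  obtain ⟨ht0, htT⟩ := ht
  obtain ⟨hs0, hsb⟩ := hs
  have h2b : (0:ℝ) < 2 * b := by linarith
  set i := ⌊2 * b * t⌋₊ with hi
  set j := ⌊2 * b * (t + s)⌋₊ with hj
  -- membership of a point in its own grid interval
  have mem : ∀ u : ℝ, 0 ≤ u →
      u ∈ Set.Icc ((⌊2 * b * u⌋₊ : ℝ) / (2 * b)) ((⌊2 * b * u⌋₊ + 1 : ℝ) / (2 * b)) := by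
    intro u hu
    have h1 : (⌊2 * b * u⌋₊ : ℝ) ≤ 2 * b * u := Nat.floor_le (by positivity)
    have h2 : 2 * b * u < ⌊2 * b * u⌋₊ + 1 := Nat.lt_floor_add_one _
    constructor
    · rw [div_le_iff₀ h2b]; linarith
    · rw [le_div_iff₀ h2b]; linarith
  have hts0 : (0:ℝ) ≤ t + s := by linarith
  have hiN : i < N := by
    have : i ≤ ⌊2 * b * (T + 1 / b)⌋₊ := by
      apply Nat.floor_le_floor
      have : 0 < 1 / b := by positivity
      nlinarith
    omega
  have hjN : j < N := by
    have : j ≤ ⌊2 * b * (T + 1 / b)⌋₊ := by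
      apply Nat.floor_le_floor
      nlinarith
    omega
  have hij : i ≤ j := Nat.floor_le_floor (by nlinarith)
  have hji : j ≤ i + 2 := by
    have h1 : 2 * b * (t + s) ≤ 2 * b * t + (2:ℕ) := by
      push_cast
      have : 2 * b * s ≤ 2 := by
        have := (mul_le_mul_iff_right₀ h2b).2 hsb
        calc 2 * b * s ≤ 2 * b * (1 / b) := this
          _ = 2 := by field_simp
      linarith
    calc j ≤ ⌊2 * b * t + (2:ℕ)⌋₊ := Nat.floor_le_floor h1
      _ = i + 2 := Nat.floor_add_natCast (by positivity) 2
  -- the three/four pieces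
  have hA : |g (t + s) - g ((j : ℝ) / (2 * b))| ≤ ε :=
    hgrid j hjN (t + s) (mem (t + s) hts0)
  have hB : |g t - g ((i : ℝ) / (2 * b))| ≤ ε :=
    hgrid i hiN t (mem t ht0)
  have step : ∀ k : ℕ, k < N →
      |g (((k:ℝ) + 1) / (2 * b)) - g ((k : ℝ) / (2 * b))| ≤ ε := by
    intro k hk
    refine hgrid k hk _ ⟨?_, le_refl _⟩
    gcongr
    linarith
  have hC : |g ((j : ℝ) / (2 * b)) - g ((i : ℝ) / (2 * b))| ≤ 2 * ε := by
    rcases (by omega : j = i ∨ j = i + 1 ∨ j = i + 2) with h | h | h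
    · rw [h]; simp; linarith
    · rw [h]
      have := step i hiN
      push_cast
      push_cast at this
      calc |g (((i:ℝ) + 1) / (2 * b)) - g ((i : ℝ) / (2 * b))| ≤ ε := this
        _ ≤ 2 * ε := by linarith
    · rw [h]
      have h1 := step i hiN
      have h2 := step (i + 1) (by omega)
      push_cast at h1 h2 ⊢
      calc |g (((i:ℝ) + 2) / (2 * b)) - g ((i : ℝ) / (2 * b))|
          ≤ |g (((i:ℝ) + 2) / (2 * b)) - g (((i:ℝ) + 1) / (2 * b))|
            + |g (((i:ℝ) + 1) / (2 * b)) - g ((i : ℝ) / (2 * b))| := abs_sub_le _ _ _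
        _ ≤ ε + ε := by
            apply add_le_add _ h1
            have : ((i:ℝ) + 1 + 1) = (i:ℝ) + 2 := by ring
            rw [this] at h2; exact h2
        _ = 2 * ε := by ring
  calc |g (t + s) - g t|
      ≤ |g (t + s) - g ((j : ℝ) / (2 * b))|
        + |g ((j : ℝ) / (2 * b)) - g ((i : ℝ) / (2 * b))|
        + |g ((i : ℝ) / (2 * b)) - g t| := by
        have := abs_sub_le (g (t + s)) (g ((j : ℝ) / (2 * b))) (g t)
        have h2 := abs_sub_le (g ((j : ℝ) / (2 * b))) (g ((i : ℝ) / (2 * b))) (g t)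
        linarith
    _ ≤ ε + 2 * ε + ε := by
        refine add_le_add (add_le_add hA hC) ?_
        rw [abs_sub_comm]; exact hB
    _ = 4 * ε := by ring
end

section
/- Let r be a real number and n a natural number with 0 < r ≤ n. Then the tail of the Poisson distribution with mean r satisfies Σ_{k=n}^∞ e^{−r} r^k / k! ≤ e^{n−r} (r/n)^n. -/
/-- Chernoff-type tail bound for the Poisson distribution with mean
`r`: for a threshold `n ≥ r`, `Σ_{k=n}^∞ e^{−r} r^k / k! ≤ e^{n−r} (r/n)^n`. -/
theorem poisson_tail_bound
    (r : ℝ) (n : ℕ) (hr : 0 < r) (hrn : r ≤ n) :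
    (∑' k : ℕ, Real.exp (-r) * r ^ (n + k) / (Nat.factorial (n + k))) ≤
      Real.exp ((n : ℝ) - r) * (r / n) ^ n := by
  have hn : 0 < (n : ℝ) := lt_of_lt_of_le hr hrn
  have hexp : Real.exp (n : ℝ) = ∑' j : ℕ, (n : ℝ) ^ j / (Nat.factorial j) := by
    rw [Real.exp_eq_exp_ℝ, NormedSpace.exp_eq_tsum ℝ]
    exact tsum_congr fun j => by rw [smul_eq_mul]; ring
  have hsum : Summable (fun j : ℕ => (n : ℝ) ^ j / (Nat.factorial j)) :=
    Real.summable_pow_div_factorial _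
  have hsum' : Summable (fun k : ℕ => (n : ℝ) ^ (n + k) / (Nat.factorial (n + k))) :=
    hsum.comp_injective (add_right_injective n)
  -- termwise bound
  have hterm : ∀ k : ℕ, Real.exp (-r) * r ^ (n + k) / (Nat.factorial (n + k)) ≤
      Real.exp (-r) * (r / n) ^ n * ((n : ℝ) ^ (n + k) / (Nat.factorial (n + k))) := by
    intro k
    have h1 : r ^ (n + k) ≤ (r / n) ^ n * (n : ℝ) ^ (n + k) := by
      have : (r / n) ^ (n + k) ≤ (r / n) ^ n := by
        apply pow_le_pow_of_le_one (by positivity) (div_le_one_of_le₀ hrn hn.le)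
        omega
      calc r ^ (n + k) = (r / n) ^ (n + k) * (n : ℝ) ^ (n + k) := by
            rw [div_pow, div_mul_cancel₀ _ (by positivity)]
        _ ≤ (r / n) ^ n * (n : ℝ) ^ (n + k) := by
            apply mul_le_mul_of_nonneg_right this (by positivity)
    rw [mul_div_assoc, mul_assoc, ← mul_div_assoc ((r / (n:ℝ)) ^ n)]
    apply mul_le_mul_of_nonneg_left _ (Real.exp_pos _).le
    gcongr
  have hsum1 : Summable (fun k : ℕ => Real.exp (-r) * r ^ (n + k) / (Nat.factorial (n + k))) := by
    have := ((Real.summable_pow_div_factorial r).comp_injective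
      (add_right_injective n)).mul_left (Real.exp (-r))
    simpa [mul_div_assoc, Function.comp] using this
  calc (∑' k : ℕ, Real.exp (-r) * r ^ (n + k) / (Nat.factorial (n + k)))
      ≤ ∑' k : ℕ, Real.exp (-r) * (r / n) ^ n * ((n : ℝ) ^ (n + k) / (Nat.factorial (n + k))) :=
        Summable.tsum_le_tsum hterm hsum1 (hsum'.mul_left _)
    _ = Real.exp (-r) * (r / n) ^ n *
        ∑' k : ℕ, ((n : ℝ) ^ (n + k) / (Nat.factorial (n + k))) := tsum_mul_left
    _ ≤ Real.exp (-r) * (r / n) ^ n * ∑' j : ℕ, (n : ℝ) ^ j / (Nat.factorial j) := by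
        apply mul_le_mul_of_nonneg_left _ (by positivity)
        exact Summable.tsum_le_tsum_of_inj (fun k => n + k) (add_right_injective n)
          (fun j _ => by positivity) (fun k => le_rfl) hsum' hsum
    _ = Real.exp ((n : ℝ) - r) * (r / n) ^ n := by
        rw [← hexp, Real.exp_sub, Real.exp_neg]
        field_simp
end

section
/- Let K ≥ 1. Let Φ : ℝ → ℝ^K be twice continuously differentiable and 2π-periodic, and let P : ℝ → Matrix (Fin K) (Fin K) ℝ be continuously differentiable and 2π-periodic with P(θ) invertible and ‖P(θ)⁻¹ Φ'(θ)‖ = 1 for all θ. For x ∈ ℝ^K and β ∈ ℝ define 𝔐(x, β) := − d/db [ ⟨P(b)⁻¹(x − Φ(b)), P(b)⁻¹ Φ'(b)⟩ ] evaluated at b = β (Euclidean inner product). Then there exists δ > 0 such that for all β ∈ ℝ and all x ∈ ℝ^K with ‖x − Φ(β)‖ ≤ δ, one has 𝔐(x, β) ≥ 1/2. -/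
attribute [local instance] Matrix.normedAddCommGroup Matrix.normedSpace

open Matrix Real

/-- The vector `Q⁻¹ v` regarded as an element of Euclidean space. -/
noncomputable def weightedVec {K : ℕ} (Q : Matrix (Fin K) (Fin K) ℝ)
    (v : EuclideanSpace ℝ (Fin K)) : EuclideanSpace ℝ (Fin K) :=
  (WithLp.equiv 2 (Fin K → ℝ)).symm (Q⁻¹.mulVec (WithLp.equiv 2 (Fin K → ℝ) v))

section Aux

/-- derivative of a periodic function is periodic -/
lemma periodic_deriv_aux {E : Type*} [NormedAddCommGroup E] [NormedSpace ℝ E]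
    {f : ℝ → E} {c : ℝ} (hf : Function.Periodic f c) :
    Function.Periodic (deriv f) c := by
  intro b
  calc deriv f (b + c) = deriv (fun x => f (x + c)) b := (deriv_comp_add_const f c b).symm
  _ = deriv f b := by rw [show (fun x => f (x + c)) = f from funext fun y => hf y]

/-- entrywise `ContDiff` implies `ContDiff` of the determinant -/
lemma contDiff_det_of_entries {K : ℕ} {n : WithTop ℕ∞} {M : ℝ → Matrix (Fin K) (Fin K) ℝ}
    (h : ∀ i j, ContDiff ℝ n fun b => M b i j) :
    ContDiff ℝ n fun b => (M b).det := by
  simp only [Matrix.det_apply, Units.smul_def, zsmul_eq_mul]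
  exact ContDiff.sum fun σ _ =>
    (contDiff_const.mul (contDiff_prod fun i _ => h (σ i) i))

/-- entrywise `ContDiff` of the inverse matrix family -/
lemma contDiff_inv_entries {K : ℕ} {M : ℝ → Matrix (Fin K) (Fin K) ℝ}
    (h : ∀ i j, ContDiff ℝ 1 fun b => M b i j)
    (hu : ∀ b, IsUnit (M b)) (i j : Fin K) :
    ContDiff ℝ 1 fun b => (M b)⁻¹ i j := by
  have hdet : ContDiff ℝ 1 fun b => (M b).det := contDiff_det_of_entries h
  have hdetne : ∀ b, (M b).det ≠ 0 := fun b =>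
    ((Matrix.isUnit_iff_isUnit_det _).mp (hu b)).ne_zero
  have hadj : ContDiff ℝ 1 fun b => (M b).adjugate i j := by
    simp only [Matrix.adjugate_apply]
    apply contDiff_det_of_entries
    intro k l
    rcases eq_or_ne k j with rfl | hk
    · simp only [Matrix.updateRow_apply, if_pos rfl]
      exact contDiff_const
    · simp only [Matrix.updateRow_apply, if_neg hk]
      exact h _ _
  have heq : (fun b => (M b)⁻¹ i j) = fun b => ((M b).det)⁻¹ * (M b).adjugate i j := by
    funext b
    rw [Matrix.inv_def, Matrix.smul_apply, Ring.inverse_eq_inv, smul_eq_mul]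
  rw [heq]
  exact (hdet.inv hdetne).mul hadj

/-- key dot-product identity -/
lemma dot_aux {K : ℕ} (A : Matrix (Fin K) (Fin K) ℝ) (u v : Fin K → ℝ) :
    (A.mulVec u) ⬝ᵥ (A.mulVec v) = u ⬝ᵥ ((Aᵀ * A).mulVec v) := by
  rw [← Matrix.mulVec_mulVec, Matrix.dotProduct_mulVec u Aᵀ, Matrix.vecMul_transpose]

end Aux

/-- The curvature
`𝔐(x, β) = − d/db ⟨P(b)⁻¹(x − Φ(b)), P(b)⁻¹ Φ'(b)⟩ |_{b=β}` of the weighted squared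
distance from the limit cycle stays at least `1/2` uniformly in a tube of some radius
`δ > 0` around the limit cycle. -/
theorem curvature_bounded_below_near_cycle
    {K : ℕ} (hK : 1 ≤ K)
    (Φ : ℝ → EuclideanSpace ℝ (Fin K))
    (hΦ : ContDiff ℝ 2 Φ) (hΦper : Function.Periodic Φ (2 * π))
    (P : ℝ → Matrix (Fin K) (Fin K) ℝ)
    (hP : ContDiff ℝ 1 P) (hPper : Function.Periodic P (2 * π))
    (hPinv : ∀ θ : ℝ, IsUnit (P θ))
    (hnorm : ∀ θ : ℝ, ‖weightedVec (P θ) (deriv Φ θ)‖ = 1)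
    (𝔐 : EuclideanSpace ℝ (Fin K) → ℝ → ℝ)
    (h𝔐 : ∀ (x : EuclideanSpace ℝ (Fin K)) (β : ℝ),
      𝔐 x β = - deriv (fun b : ℝ =>
        inner (𝕜 := ℝ) (weightedVec (P b) (x - Φ b)) (weightedVec (P b) (deriv Φ b))) β) :
    ∃ δ > 0, ∀ (β : ℝ) (x : EuclideanSpace ℝ (Fin K)),
      ‖x - Φ β‖ ≤ δ → 1 / 2 ≤ 𝔐 x β := by
  -- Φ' is C¹
  have h2 : (2 : WithTop ℕ∞) = 1 + 1 := by norm_num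
  rw [h2] at hΦ
  obtain ⟨hΦdiff, -, hΦ'⟩ := contDiff_succ_iff_deriv.mp hΦ
  -- entries of P are C¹
  have hPij : ∀ i j, ContDiff ℝ 1 fun b => P b i j := by
    intro i j
    let L1 : Matrix (Fin K) (Fin K) ℝ →ₗ[ℝ] (Fin K → ℝ) :=
      LinearMap.proj (R := ℝ) (φ := fun _ : Fin K => Fin K → ℝ) i
    let L2 : (Fin K → ℝ) →ₗ[ℝ] ℝ :=
      LinearMap.proj (R := ℝ) (φ := fun _ : Fin K => ℝ) j
    exact (LinearMap.toContinuousLinearMap (L2.comp L1)).contDiff.comp hP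
  have hA : ∀ i j, ContDiff ℝ 1 fun b => (P b)⁻¹ i j :=
    contDiff_inv_entries hPij hPinv
  -- coordinates of Φ'
  have hφc : ∀ i, ContDiff ℝ 1 fun b => deriv Φ b i := fun i =>
    (EuclideanSpace.proj (𝕜 := ℝ) i).contDiff.comp hΦ'
  -- the vector field w
  set N : ℝ → Matrix (Fin K) (Fin K) ℝ := fun b => ((P b)⁻¹)ᵀ * (P b)⁻¹ with hN
  set w0 : ℝ → (Fin K → ℝ) := fun b =>
    (N b).mulVec (WithLp.equiv 2 (Fin K → ℝ) (deriv Φ b)) with hw0def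
  have hw0 : ContDiff ℝ 1 w0 := by
    rw [contDiff_pi]
    intro i
    have : (fun b => w0 b i)
        = fun b => ∑ j, (∑ k, (P b)⁻¹ k i * (P b)⁻¹ k j) * deriv Φ b j := by
      funext b
      simp [hw0def, hN, Matrix.mulVec, dotProduct, Matrix.mul_apply,
        Matrix.transpose_apply]
    rw [this]
    exact ContDiff.sum fun j _ =>
      (ContDiff.sum fun k _ => (hA k i).mul (hA k j)).mul (hφc j)
  set w : ℝ → EuclideanSpace ℝ (Fin K) :=
    fun b => (WithLp.equiv 2 (Fin K → ℝ)).symm (w0 b) with hwdef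
  have hw : ContDiff ℝ 1 w :=
    (((EuclideanSpace.equiv (Fin K) ℝ).symm :
      (Fin K → ℝ) →L[ℝ] EuclideanSpace ℝ (Fin K)).contDiff).comp hw0
  -- the key pointwise identity
  have key : ∀ (x : EuclideanSpace ℝ (Fin K)) (b : ℝ),
      (inner (𝕜 := ℝ) (weightedVec (P b) (x - Φ b)) (weightedVec (P b) (deriv Φ b)))
        = inner (𝕜 := ℝ) (x - Φ b) (w b) := by
    intro x b
    have hd := dot_aux (P b)⁻¹ (WithLp.equiv 2 (Fin K → ℝ) (x - Φ b))
      (WithLp.equiv 2 (Fin K → ℝ) (deriv Φ b))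
    simp only [weightedVec, PiLp.inner_apply, RCLike.inner_apply, starRingEnd_apply,
      star_trivial, WithLp.equiv_symm_apply, PiLp.toLp_apply, hwdef, hw0def, hN]
    simp only [dotProduct] at hd
    exact (Finset.sum_congr rfl fun _ _ => mul_comm _ _).trans
      (hd.trans (Finset.sum_congr rfl fun _ _ => mul_comm _ _))
  -- value of ⟪Φ', w⟫
  have hone : ∀ b : ℝ, inner (𝕜 := ℝ) (deriv Φ b) (w b) = 1 := by
    intro b
    have hd := dot_aux (P b)⁻¹ (WithLp.equiv 2 (Fin K → ℝ) (deriv Φ b))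
      (WithLp.equiv 2 (Fin K → ℝ) (deriv Φ b))
    have h1 : inner (𝕜 := ℝ) (weightedVec (P b) (deriv Φ b)) (weightedVec (P b) (deriv Φ b))
        = inner (𝕜 := ℝ) (deriv Φ b) (w b) := by
      simp only [weightedVec, PiLp.inner_apply, RCLike.inner_apply, starRingEnd_apply,
        star_trivial, WithLp.equiv_symm_apply, PiLp.toLp_apply, hwdef, hw0def, hN]
      simpa [dotProduct, mul_comm] using hd
    rw [← h1, real_inner_self_eq_norm_sq, hnorm b]
    norm_num
  -- the formula for 𝔐
  have hform : ∀ (x : EuclideanSpace ℝ (Fin K)) (β : ℝ),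
      𝔐 x β = 1 - inner (𝕜 := ℝ) (x - Φ β) (deriv w β) := by
    intro x β
    have hwd : HasDerivAt w (deriv w β) β :=
      ((hw.differentiable one_ne_zero) β).hasDerivAt
    have hΦd : HasDerivAt Φ (deriv Φ β) β := (hΦdiff β).hasDerivAt
    have h1 : HasDerivAt (fun b => x - Φ b) (-(deriv Φ β)) β := by
      simpa using (hΦd.const_sub x)
    have h2 := h1.inner ℝ hwd
    have heqfun : (fun b : ℝ =>
        inner (𝕜 := ℝ) (weightedVec (P b) (x - Φ b)) (weightedVec (P b) (deriv Φ b)))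
        = fun b => inner (𝕜 := ℝ) (x - Φ b) (w b) := funext fun b => key x b
    rw [h𝔐, heqfun, h2.deriv]
    have := hone β
    rw [inner_neg_left, this]
    ring
  -- periodicity of w
  have hΦ'per : Function.Periodic (deriv Φ) (2 * π) := periodic_deriv_aux hΦper
  have hwper : Function.Periodic w (2 * π) := by
    intro b
    simp only [hwdef, hw0def, hN, hPper b, hΦ'per b]
  have hw'per : Function.Periodic (deriv w) (2 * π) := periodic_deriv_aux hwper
  -- bound on deriv w
  have hcont : Continuous (deriv w) := hw.continuous_deriv le_rfl
  obtain ⟨C, hC⟩ := (isCompact_Icc (a := (0:ℝ)) (b := 2 * π)).exists_bound_of_continuousOn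
    hcont.continuousOn
  set D : ℝ := max C 0 with hD
  have hDnonneg : 0 ≤ D := le_max_right _ _
  have hbound : ∀ β : ℝ, ‖deriv w β‖ ≤ D := by
    intro β
    obtain ⟨y, hy, hval⟩ := hw'per.exists_mem_Ico₀ (by positivity) β
    rw [hval]
    exact le_trans (hC y (Set.mem_Icc_of_Ico hy)) (le_max_left _ _)
  -- conclusion
  refine ⟨1 / (2 * (D + 1)), by positivity, ?_⟩
  intro β x hx
  rw [hform]
  have hCS : |inner (𝕜 := ℝ) (x - Φ β) (deriv w β)| ≤ ‖x - Φ β‖ * ‖deriv w β‖ :=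
    abs_real_inner_le_norm _ _
  have h3 : |inner (𝕜 := ℝ) (x - Φ β) (deriv w β)| ≤ (1 / (2 * (D + 1))) * D := by
    refine le_trans hCS ?_
    have := hbound β
    have h4 : (0:ℝ) ≤ ‖x - Φ β‖ := norm_nonneg _
    nlinarith [norm_nonneg (deriv w β)]
  have h5 : (1 / (2 * (D + 1))) * D ≤ 1 / 2 := by
    rw [div_mul_eq_mul_div, mul_comm]
    rw [div_le_div_iff₀ (by positivity) (by norm_num)]
    nlinarith
  have := abs_le.mp h3
  linarith [this.1, this.2]
end
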